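/- arXiv:math/0502060 — 4 statements merged into one kernel-verified Lean document; each statement's English description precedes it below -/
import Mathlib

section
/- Let Q be a finitely generated subgroup of the multiplicative group of positive rational numbers such that the only element of Q that is a (positive) integer is 1. Then for every rational number r, the set of integers lying in the coset rQ = {r·q : q ∈ Q} is finite. -/
/-!
Let `S` be the finite set of primes occurring in the generators of `Q`, so that every element of
`Q` is an `S`-unit. If `m, n` are integers in `rQ` (`r ≠ 0`) with `v_p(m) ≤ v_p(n)` for all
`p ∈ S`, then `n / m ∈ Q` has nonnegative valuation at every prime, hence is an integer, hence
is `1`. So `n ↦ (v_p(n))_{p ∈ S}` is injective on the integers of `rQ` with image an antichain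
in `ℕ^S`, which is finite by Dickson's lemma.
-/

theorem WellQuasiOrderedLE.finite_of_le_imp_eq {α β : Type*} [Preorder β] [WellQuasiOrderedLE β]
    {s : Set α} (f : α → β) (h : ∀ x ∈ s, ∀ y ∈ s, f x ≤ f y → x = y) : s.Finite := by
  have hinj : s.InjOn f := fun x hx y hy hxy => h x hx y hy hxy.le
  have hanti : IsAntichain (· ≤ ·) (f '' s) := by
    rintro _ ⟨x, hx, rfl⟩ _ ⟨y, hy, rfl⟩ hne hle
    exact hne (congrArg f (h x hx y hy hle))
  exact (finite_of_isAntichain hanti).of_finite_image hinj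

namespace Rat

theorem padicValRat_eq_zero_of_not_dvd {p : ℕ} {q : ℚ} (hnum : ¬(p : ℤ) ∣ q.num)
    (hden : ¬p ∣ q.den) : padicValRat p q = 0 := by
  rw [padicValRat_def, padicValInt.eq_zero_of_not_dvd hnum, padicValNat.eq_zero_of_not_dvd hden]
  rfl

theorem exists_int_eq_of_padicValRat_nonneg {q : ℚ} (h : ∀ p : ℕ, p.Prime → 0 ≤ padicValRat p q) :
    ∃ n : ℤ, q = n := by
  refine ⟨q.num, (den_eq_one_iff q).mp ?_ |>.symm⟩
  by_contra hden
  obtain ⟨p, hp, hpden⟩ := Nat.exists_prime_and_dvd hden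
  have : Fact p.Prime := ⟨hp⟩
  have hpnum : ¬(p : ℤ) ∣ q.num := fun hpnum =>
    hp.one_lt.ne' (Nat.eq_one_of_dvd_coprimes q.reduced (Int.natCast_dvd.mp hpnum) hpden)
  have hvden : 1 ≤ padicValNat p q.den := one_le_padicValNat_of_dvd q.den_nz hpden
  have := h p hp
  rw [padicValRat_def, padicValInt.eq_zero_of_not_dvd hpnum] at this
  omega

def sUnits (S : Set ℕ) : Subgroup ℚˣ where
  carrier := {u | ∀ p : ℕ, p.Prime → p ∉ S → padicValRat p u = 0}
  one_mem' := by simp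
  mul_mem' {u v} hu hv p hp hpS := by
    have : Fact p.Prime := ⟨hp⟩
    simp [padicValRat.mul u.ne_zero v.ne_zero, hu p hp hpS, hv p hp hpS]
  inv_mem' {u} hu p hp hpS := by
    have : Fact p.Prime := ⟨hp⟩
    simp [padicValRat.inv, hu p hp hpS]

theorem sUnits_mono {S T : Set ℕ} (hST : S ⊆ T) : sUnits S ≤ sUnits T :=
  fun _ hu p hp hpT => hu p hp (fun hpS => hpT (hST hpS))

def primeSupport (q : ℚ) : Finset ℕ := q.num.natAbs.primeFactors ∪ q.den.primeFactors

theorem mem_sUnits_primeSupport (u : ℚˣ) : u ∈ sUnits (primeSupport u) := by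
  intro p hp hpS
  simp only [primeSupport, Finset.coe_union, Set.mem_union, Finset.mem_coe, Nat.mem_primeFactors,
    not_or] at hpS
  refine padicValRat_eq_zero_of_not_dvd (fun hnum => ?_) fun hden => hpS.2 ⟨hp, hden, den_nz _⟩
  exact hpS.1 ⟨hp, Int.natCast_dvd.mp hnum, by simp⟩

theorem exists_finset_le_sUnits {Q : Subgroup ℚˣ} (hQ : Q.FG) :
    ∃ S : Finset ℕ, Q ≤ sUnits S := by
  obtain ⟨T, rfl⟩ := hQ
  refine ⟨T.biUnion fun u => primeSupport u,
    (Subgroup.closure_le _).mpr fun u hu => sUnits_mono ?_ (mem_sUnits_primeSupport u)⟩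
  exact Finset.coe_subset.mpr (Finset.subset_biUnion_of_mem (fun u : ℚˣ => primeSupport u) hu)

theorem eq_of_padicValInt_le_of_mem_coset {Q : Subgroup ℚˣ} {S : Finset ℕ}
    (hQS : Q ≤ sUnits S) (hint : ∀ q ∈ Q, (∃ n : ℤ, (q : ℚ) = n) → (q : ℚ) = 1)
    {r : ℚ} (hr : r ≠ 0) {m n : ℤ} (hm : ∃ q ∈ Q, (m : ℚ) = r * q) (hn : ∃ q ∈ Q, (n : ℚ) = r * q)
    (hle : ∀ p ∈ S, padicValInt p m ≤ padicValInt p n) : m = n := by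
  obtain ⟨qm, hqm, hm⟩ := hm
  obtain ⟨qn, hqn, hn⟩ := hn
  have hm0 : (m : ℚ) ≠ 0 := hm ▸ mul_ne_zero hr qm.ne_zero
  have hn0 : (n : ℚ) ≠ 0 := hn ▸ mul_ne_zero hr qn.ne_zero
  have hquot : ((qn * qm⁻¹ : ℚˣ) : ℚ) = n / m := by
    rw [Units.val_mul, Units.val_inv_eq_inv_val, hm, hn]
    field_simp [hr]
  have hval : ∀ p : ℕ, p.Prime → 0 ≤ padicValRat p (n / m) := by
    intro p hp
    by_cases hpS : p ∈ S
    · have : Fact p.Prime := ⟨hp⟩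
      rw [padicValRat.div hn0 hm0, padicValRat.of_int, padicValRat.of_int, sub_nonneg]
      exact_mod_cast hle p hpS
    · rw [← hquot, hQS (mul_mem hqn (inv_mem hqm)) p hp hpS]
  have h1 := hint _ (mul_mem hqn (inv_mem hqm)) (hquot ▸ exists_int_eq_of_padicValRat_nonneg hval)
  rw [hquot, div_eq_one_iff_eq hm0] at h1
  exact_mod_cast h1.symm

end Rat

theorem stmt_0_general (Q : Subgroup ℚˣ)
    (hfg : Q.FG)
    (hint : ∀ q ∈ Q, (∃ n : ℤ, (q : ℚ) = (n : ℚ)) → (q : ℚ) = 1) (r : ℚ) :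
    {n : ℤ | ∃ q ∈ Q, (n : ℚ) = r * (q : ℚ)}.Finite := by
  rcases eq_or_ne r 0 with rfl | hr
  · exact (Set.finite_singleton 0).subset fun n ⟨_, _, hn⟩ => by simpa using hn
  obtain ⟨S, hQS⟩ := Rat.exists_finset_le_sUnits hfg
  refine WellQuasiOrderedLE.finite_of_le_imp_eq (fun (n : ℤ) (p : S) => padicValInt p n) ?_
  intro m hm n hn hle
  exact Rat.eq_of_padicValInt_le_of_mem_coset hQS hint hr hm hn fun p hp => hle ⟨p, hp⟩

/-- If `Q` is a finitely generated subgroup of the multiplicative group of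
positive rationals whose only integral element is 1, then for every rational `r` the set of
integers lying in the coset `rQ` is finite. -/
theorem stmt_0 (Q : Subgroup ℚˣ) (hpos : ∀ q ∈ Q, (0 : ℚ) < (q : ℚ))
    (hfg : Q.FG)
    (hint : ∀ q ∈ Q, (∃ n : ℤ, (q : ℚ) = (n : ℚ)) → (q : ℚ) = 1) (r : ℚ) :
    {n : ℤ | ∃ q ∈ Q, (n : ℚ) = r * (q : ℚ)}.Finite :=
  stmt_0_general Q hfg hint r
end

section
/- Let V be a linear subspace of ℝ^n whose intersection with the nonnegative orthant {x ∈ ℝ^n : x_i ≥ 0 for all i} is {0}. Then for every a ∈ ℝ^n, the intersection of the affine subspace a + V with the nonnegative orthant is compact. -/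
/-- A linear subspace of ℝⁿ meeting the nonnegative orthant only at 0 has
compact intersection of each of its translates with the nonnegative orthant. -/
theorem stmt_1 (n : ℕ) (V : Submodule ℝ (EuclideanSpace ℝ (Fin n)))
    (hV : (V : Set (EuclideanSpace ℝ (Fin n))) ∩ {x | ∀ i, 0 ≤ x i} = {0})
    (a : EuclideanSpace ℝ (Fin n)) :
    IsCompact ({x | ∃ v ∈ V, x = a + v} ∩ {x | ∀ i, 0 ≤ x i}) := by
  set S := {x | ∃ v ∈ V, x = a + v} ∩ {x : EuclideanSpace ℝ (Fin n) | ∀ i, 0 ≤ x i} with hS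
  have hVc : IsClosed (V : Set (EuclideanSpace ℝ (Fin n))) :=
    Submodule.closed_of_finiteDimensional V
  have horth : IsClosed {x : EuclideanSpace ℝ (Fin n) | ∀ i, 0 ≤ x i} := by
    have : {x : EuclideanSpace ℝ (Fin n) | ∀ i, 0 ≤ x i}
        = ⋂ i, {x : EuclideanSpace ℝ (Fin n) | 0 ≤ x i} := by
      ext x; simp
    rw [this]
    exact isClosed_iInter fun i =>
      isClosed_le continuous_const (EuclideanSpace.proj i).continuous
  have hclosed : IsClosed S := by
    apply IsClosed.inter _ horth
    have : {x : EuclideanSpace ℝ (Fin n) | ∃ v ∈ V, x = a + v}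
        = (fun v => a + v) '' (V : Set (EuclideanSpace ℝ (Fin n))) := by
      ext x
      constructor
      · rintro ⟨v, hv, rfl⟩; exact ⟨v, hv, rfl⟩
      · rintro ⟨v, hv, rfl⟩; exact ⟨v, hv, rfl⟩
    rw [this]
    exact (Homeomorph.addLeft a).isClosedMap _ hVc
  have hbdd : Bornology.IsBounded S := by
    by_contra hb
    rw [isBounded_iff_forall_norm_le] at hb
    push_neg at hb
    choose x hxS hxn using fun k : ℕ => hb k
    have hxpos : ∀ k, 0 < ‖x k‖ := fun k => lt_of_le_of_lt (Nat.cast_nonneg k) (hxn k)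
    set u : ℕ → EuclideanSpace ℝ (Fin n) := fun k => ‖x k‖⁻¹ • x k with hu
    have husphere : ∀ k, u k ∈ Metric.sphere (0 : EuclideanSpace ℝ (Fin n)) 1 := by
      intro k
      simp [hu, norm_smul, abs_of_pos (hxpos k), inv_mul_cancel₀ (hxpos k).ne']
    obtain ⟨L, hLs, φ, hφ, hφt⟩ :=
      (isCompact_sphere (0 : EuclideanSpace ℝ (Fin n)) 1).tendsto_subseq husphere
    have hnormtop : Filter.Tendsto (fun k => ‖x (φ k)‖) Filter.atTop Filter.atTop := by
      apply Filter.tendsto_atTop_mono (fun k => ?_) tendsto_natCast_atTop_atTop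
      calc ((k : ℝ)) ≤ (φ k : ℝ) := by exact_mod_cast hφ.le_apply
        _ ≤ ‖x (φ k)‖ := (hxn (φ k)).le
    have hinv0 : Filter.Tendsto (fun k => ‖x (φ k)‖⁻¹) Filter.atTop (nhds 0) :=
      hnormtop.inv_tendsto_atTop
    -- L ∈ orthant
    have hLorth : ∀ i, 0 ≤ L i := by
      intro i
      have : Filter.Tendsto (fun k => (u (φ k)) i) Filter.atTop (nhds (L i)) :=
        ((EuclideanSpace.proj i).continuous.tendsto L).comp hφt
      refine le_of_tendsto_of_tendsto' tendsto_const_nhds this fun k => ?_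
      have := (hxS (φ k)).2 i
      have h0 : (0:ℝ) ≤ ‖x (φ k)‖⁻¹ := inv_nonneg.2 (norm_nonneg _)
      simpa [hu] using mul_nonneg h0 this
    -- L ∈ V
    have hLV : L ∈ V := by
      have hmem : ∀ k, u (φ k) - ‖x (φ k)‖⁻¹ • a ∈ V := by
        intro k
        obtain ⟨v, hv, hxv⟩ := (hxS (φ k)).1
        have : u (φ k) - ‖x (φ k)‖⁻¹ • a = ‖x (φ k)‖⁻¹ • v := by
          simp [hu, hxv, smul_add]
        rw [this]
        exact V.smul_mem _ hv
      have htend : Filter.Tendsto (fun k => u (φ k) - ‖x (φ k)‖⁻¹ • a)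
          Filter.atTop (nhds L) := by
        have h2 : Filter.Tendsto (fun k => ‖x (φ k)‖⁻¹ • a) Filter.atTop
            (nhds ((0:ℝ) • a)) := hinv0.smul_const a
        simpa using hφt.sub h2
      exact hVc.mem_of_tendsto htend (Filter.Eventually.of_forall hmem)
    have : L ∈ (V : Set (EuclideanSpace ℝ (Fin n))) ∩ {x | ∀ i, 0 ≤ x i} := ⟨hLV, hLorth⟩
    rw [hV] at this
    have hL1 : ‖L‖ = 1 := by simpa using hLs
    rw [Set.mem_singleton_iff] at this
    rw [this] at hL1
    simp at hL1
  exact Metric.isCompact_of_isClosed_isBounded hclosed hbdd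
end

section
/- Let G be a group and let V, W be subgroups of G that are commensurable with each other, and suppose V is commensurable with all of its conjugates. Then for every g ∈ G, the indices [V : V ∩ V^g], [V^g : V ∩ V^g], [W : W ∩ W^g], [W^g : W ∩ W^g] are all finite and [V : V ∩ V^g] · [W^g : W ∩ W^g] = [V^g : V ∩ V^g] · [W : W ∩ W^g]; that is, the ratio [V : V ∩ V^g] / [V^g : V ∩ V^g] ∈ ℚ>0 does not depend on the choice of subgroup within a commensurability class. -/
/-- The conjugate subgroup `H^g = g⁻¹ H g`. -/
def conjSubgroup {G : Type*} [Group G] (H : Subgroup G) (g : G) : Subgroup G :=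
  H.map (MulAut.conj g⁻¹).toMonoidHom

lemma relindex_map_equiv {G : Type*} [Group G] (e : G ≃* G) (H K : Subgroup G) :
    (H.map e.toMonoidHom).relIndex (K.map e.toMonoidHom) = H.relIndex K := by
  rw [Subgroup.map_equiv_eq_comap_symm', Subgroup.relIndex_comap, Subgroup.map_map]
  congr 1
  ext x
  simp

lemma commensurable_conjSubgroup {G : Type*} [Group G] {H K : Subgroup G} (g : G)
    (h : Subgroup.Commensurable H K) : Subgroup.Commensurable (conjSubgroup H g) (conjSubgroup K g) := by
  unfold Subgroup.Commensurable conjSubgroup at *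
  rw [relindex_map_equiv, relindex_map_equiv]
  exact h

lemma conjSubgroup_inf {G : Type*} [Group G] (H K : Subgroup G) (g : G) :
    conjSubgroup (H ⊓ K) g = conjSubgroup H g ⊓ conjSubgroup K g :=
  Subgroup.map_inf H K _ (MulAut.conj g⁻¹).injective

lemma commensurable_inf_right {G : Type*} [Group G] {H K : Subgroup G}
    (h : Subgroup.Commensurable H K) : Subgroup.Commensurable H (H ⊓ K) := by
  constructor
  · rw [Subgroup.relIndex_eq_one.2 inf_le_left]; exact one_ne_zero
  · rw [Subgroup.inf_relIndex_left]; exact h.2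

/-- If `V` and `W` are commensurable subgroups and `V` is commensurable with
all its conjugates, then all four indices `[V : V ∩ V^g]`, `[V^g : V ∩ V^g]`,
`[W : W ∩ W^g]`, `[W^g : W ∩ W^g]` are finite, and
`[V : V ∩ V^g] ⬝ [W^g : W ∩ W^g] = [V^g : V ∩ V^g] ⬝ [W : W ∩ W^g]`. -/
theorem stmt_3 {G : Type*} [Group G] (V W : Subgroup G)
    (hVW : Subgroup.Commensurable V W)
    (hconj : ∀ g : G, Subgroup.Commensurable V (conjSubgroup V g)) (g : G) :
    ((conjSubgroup V g).relIndex V ≠ 0 ∧ V.relIndex (conjSubgroup V g) ≠ 0 ∧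
      (conjSubgroup W g).relIndex W ≠ 0 ∧ W.relIndex (conjSubgroup W g) ≠ 0) ∧
    (conjSubgroup V g).relIndex V * W.relIndex (conjSubgroup W g) =
      V.relIndex (conjSubgroup V g) * (conjSubgroup W g).relIndex W := by
  set Vg := conjSubgroup V g with hVg
  set Wg := conjSubgroup W g with hWg
  have c1 : Subgroup.Commensurable V Vg := hconj g
  have c3 : Subgroup.Commensurable Vg Wg := commensurable_conjSubgroup g hVW
  have c4 : Subgroup.Commensurable W Wg := (hVW.symm.trans c1).trans c3
  refine ⟨⟨c1.2, c1.1, c4.2, c4.1⟩, ?_⟩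
  -- notation
  set D : Subgroup G := (W ⊓ Wg) ⊓ (V ⊓ Vg) with hD
  set F : Subgroup G := V ⊓ W with hF
  set Fg : Subgroup G := Vg ⊓ Wg with hFg
  have hFgc : Fg = conjSubgroup F g := by rw [hFg, hF, conjSubgroup_inf]
  have hDF : D ≤ F := le_inf (inf_le_right.trans inf_le_left) (inf_le_left.trans inf_le_left)
  have hDFg : D ≤ Fg := le_inf (inf_le_right.trans inf_le_right) (inf_le_left.trans inf_le_right)
  -- commensurabilities for finiteness of p, q
  have cVVg : Subgroup.Commensurable V (V ⊓ Vg) := commensurable_inf_right c1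
  have cWWg : Subgroup.Commensurable W (W ⊓ Wg) := commensurable_inf_right c4
  have cross1 : Subgroup.Commensurable (W ⊓ Wg) (V ⊓ Vg) :=
    (cWWg.symm.trans hVW.symm).trans cVVg
  have hp : D.relIndex (V ⊓ Vg) ≠ 0 := by
    rw [hD, Subgroup.inf_relIndex_right]; exact cross1.1
  have hq : D.relIndex (W ⊓ Wg) ≠ 0 := by
    rw [hD, Subgroup.inf_relIndex_left]; exact cross1.2
  -- index identities
  have e1 : D.relIndex (V ⊓ Vg) * Vg.relIndex V = D.relIndex V := by
    rw [← Subgroup.inf_relIndex_left V Vg]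
    exact Subgroup.relIndex_mul_relIndex _ _ _ inf_le_right inf_le_left
  have e2 : D.relIndex (V ⊓ Vg) * V.relIndex Vg = D.relIndex Vg := by
    rw [← Subgroup.inf_relIndex_right V Vg]
    exact Subgroup.relIndex_mul_relIndex _ _ _ inf_le_right inf_le_right
  have e3 : D.relIndex (W ⊓ Wg) * Wg.relIndex W = D.relIndex W := by
    rw [← Subgroup.inf_relIndex_left W Wg]
    exact Subgroup.relIndex_mul_relIndex _ _ _ inf_le_left inf_le_left
  have e4 : D.relIndex (W ⊓ Wg) * W.relIndex Wg = D.relIndex Wg := by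
    rw [← Subgroup.inf_relIndex_right W Wg]
    exact Subgroup.relIndex_mul_relIndex _ _ _ inf_le_left inf_le_right
  have e5 : D.relIndex F * F.relIndex V = D.relIndex V :=
    Subgroup.relIndex_mul_relIndex _ _ _ hDF inf_le_left
  have e6 : D.relIndex F * F.relIndex W = D.relIndex W :=
    Subgroup.relIndex_mul_relIndex _ _ _ hDF inf_le_right
  have e7 : D.relIndex Fg * F.relIndex V = D.relIndex Vg := by
    have : Fg.relIndex Vg = F.relIndex V := by
      rw [hFgc, hVg]; exact relindex_map_equiv _ _ _
    rw [← this]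
    exact Subgroup.relIndex_mul_relIndex _ _ _ hDFg inf_le_left
  have e8 : D.relIndex Fg * F.relIndex W = D.relIndex Wg := by
    have : Fg.relIndex Wg = F.relIndex W := by
      rw [hFgc, hWg]; exact relindex_map_equiv _ _ _
    rw [← this]
    exact Subgroup.relIndex_mul_relIndex _ _ _ hDFg inf_le_right
  -- conclude
  have key : (D.relIndex (V ⊓ Vg) * D.relIndex (W ⊓ Wg)) *
      (Vg.relIndex V * W.relIndex Wg) =
      (D.relIndex (V ⊓ Vg) * D.relIndex (W ⊓ Wg)) *
      (V.relIndex Vg * Wg.relIndex W) := by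
    calc (D.relIndex (V ⊓ Vg) * D.relIndex (W ⊓ Wg)) * (Vg.relIndex V * W.relIndex Wg)
        = (D.relIndex (V ⊓ Vg) * Vg.relIndex V) * (D.relIndex (W ⊓ Wg) * W.relIndex Wg) := by
          ring
      _ = (D.relIndex F * F.relIndex V) * (D.relIndex Fg * F.relIndex W) := by
          rw [e1, e4, e5, e8]
      _ = (D.relIndex Fg * F.relIndex V) * (D.relIndex F * F.relIndex W) := by ring
      _ = (D.relIndex (V ⊓ Vg) * V.relIndex Vg) * (D.relIndex (W ⊓ Wg) * Wg.relIndex W) := by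
          rw [e2, e3, e6, e7]
      _ = (D.relIndex (V ⊓ Vg) * D.relIndex (W ⊓ Wg)) * (V.relIndex Vg * Wg.relIndex W) := by
          ring
  exact Nat.eq_of_mul_eq_mul_left (Nat.pos_of_ne_zero (by
    exact mul_ne_zero hp hq)) key
end

section
/- Let G be a group and E a set of subgroups of G closed under conjugation. Call H ∈ E vertical if every K ∈ E containing H has a conjugate contained in H. Then the relation on vertical subgroups defined by H ~ K if and only if some conjugate of H is contained in K is an equivalence relation (in particular, it is symmetric). -/
lemma mem_conjSubgroup {G : Type*} [Group G] {H : Subgroup G} {g x : G} :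
    x ∈ conjSubgroup H g ↔ g * x * g⁻¹ ∈ H := by
  constructor
  · rintro ⟨h, hh, rfl⟩
    simpa [mul_assoc] using hh
  · intro hx
    exact ⟨g * x * g⁻¹, hx, by simp [mul_assoc]⟩

lemma conjSubgroup_conjSubgroup {G : Type*} [Group G] (H : Subgroup G) (g g' : G) :
    conjSubgroup (conjSubgroup H g) g' = conjSubgroup H (g * g') := by
  ext x
  simp only [mem_conjSubgroup]
  have e : g * (g' * x * g'⁻¹) * g⁻¹ = (g * g') * x * (g * g')⁻¹ := by group
  rw [e]

lemma conjSubgroup_one {G : Type*} [Group G] (H : Subgroup G) :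
    conjSubgroup H 1 = H := by
  ext x; simp [mem_conjSubgroup]

lemma conjSubgroup_mono {G : Type*} [Group G] {H K : Subgroup G} (h : H ≤ K) (g : G) :
    conjSubgroup H g ≤ conjSubgroup K g := by
  intro x hx
  rw [mem_conjSubgroup] at hx ⊢
  exact h hx

lemma le_conjSubgroup_inv {G : Type*} [Group G] {H K : Subgroup G} {g : G}
    (h : conjSubgroup H g ≤ K) : H ≤ conjSubgroup K g⁻¹ := by
  intro x hx
  rw [mem_conjSubgroup]
  exact h (mem_conjSubgroup.mpr (by simpa [mul_assoc] using hx))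

/-- Let `E` be a conjugation-closed set of subgroups of `G` and call `H ∈ E`
vertical if every `K ∈ E` containing `H` has a conjugate contained in `H`.  Then the
relation `H ~ K ↔ some conjugate of H is contained in K` is an equivalence relation on
the vertical subgroups. -/
theorem stmt_5 {G : Type*} [Group G] (E : Set (Subgroup G))
    (hE : ∀ H ∈ E, ∀ g : G, conjSubgroup H g ∈ E) :
    Equivalence (fun
      (H K : {H : Subgroup G //
        H ∈ E ∧ ∀ K ∈ E, H ≤ K → ∃ g : G, conjSubgroup K g ≤ H}) =>
      ∃ g : G, conjSubgroup (H : Subgroup G) g ≤ (K : Subgroup G)) := by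
  constructor
  · intro H
    exact ⟨1, by rw [conjSubgroup_one]⟩
  · rintro H K ⟨g, hg⟩
    obtain ⟨g', hg'⟩ := H.2.2 (conjSubgroup K g⁻¹) (hE K K.2.1 g⁻¹) (le_conjSubgroup_inv hg)
    exact ⟨g⁻¹ * g', by rwa [conjSubgroup_conjSubgroup] at hg'⟩
  · rintro H K L ⟨g, hg⟩ ⟨g', hg'⟩
    exact ⟨g * g', by
      rw [← conjSubgroup_conjSubgroup]
      exact le_trans (conjSubgroup_mono hg g') hg'⟩
end
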